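/- Stability of viscosity solutions under uniform convergence with gradient convergence: let H : ℝⁿ × ℝⁿ → ℝ be continuous, and let u_k : U → ℝ be semiconcave with a common constant C, each a viscosity solution of H(x, Du) = 0 on the open set U ⊂ ℝⁿ, with u_k converging uniformly to u on U. Then u is a viscosity solution of H(x, Du) = 0 on U. -/

import Mathlib

variable {n : ℕ}

/-- `v` is a supergradient of `f` at `p` relative to `U`. -/
def IsSuperGradOn (U : Set (EuclideanSpace ℝ (Fin n)))
    (f : EuclideanSpace ℝ (Fin n) → ℝ) (p v : EuclideanSpace ℝ (Fin n)) : Prop :=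
  ∀ ε > (0:ℝ), ∃ δ > (0:ℝ), ∀ y ∈ U, ‖y - p‖ < δ →
    f y ≤ f p + (inner ℝ v (y - p) : ℝ) + ε * ‖y - p‖

/-- `v` is a subgradient of `f` at `p` relative to `U`. -/
def IsSubGradOn (U : Set (EuclideanSpace ℝ (Fin n)))
    (f : EuclideanSpace ℝ (Fin n) → ℝ) (p v : EuclideanSpace ℝ (Fin n)) : Prop :=
  ∀ ε > (0:ℝ), ∃ δ > (0:ℝ), ∀ y ∈ U, ‖y - p‖ < δ →
    f y ≥ f p + (inner ℝ v (y - p) : ℝ) - ε * ‖y - p‖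

/-- `u` is a viscosity solution of H(x, Du) = 0 on `U`. -/
def IsViscositySolOn (H : EuclideanSpace ℝ (Fin n) → EuclideanSpace ℝ (Fin n) → ℝ)
    (u : EuclideanSpace ℝ (Fin n) → ℝ) (U : Set (EuclideanSpace ℝ (Fin n))) : Prop :=
  ∀ x ∈ U, (∀ v, IsSuperGradOn U u x v → H x v ≤ 0) ∧
           (∀ v, IsSubGradOn U u x v → H x v ≥ 0)

lemma key (H : EuclideanSpace ℝ (Fin n) → EuclideanSpace ℝ (Fin n) → ℝ)
    (hH : Continuous fun p : EuclideanSpace ℝ (Fin n) × EuclideanSpace ℝ (Fin n) => H p.1 p.2)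
    (U : Set (EuclideanSpace ℝ (Fin n))) (hU : IsOpen U)
    (uk : ℕ → EuclideanSpace ℝ (Fin n) → ℝ) (u : EuclideanSpace ℝ (Fin n) → ℝ)
    (hcont : ∀ k, ContinuousOn (uk k) U)
    (hsol : ∀ k, ∀ y ∈ U, ∀ w, IsSuperGradOn U (uk k) y w → H y w ≤ 0)
    (hconv : ∀ ε > (0:ℝ), ∃ k, ∀ y ∈ U, |u y - uk k y| < ε)
    (x : EuclideanSpace ℝ (Fin n)) (hx : x ∈ U) (v : EuclideanSpace ℝ (Fin n))
    (hv : IsSuperGradOn U u x v) : H x v ≤ 0 := by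
  by_contra hpos
  push_neg at hpos
  -- positivity neighborhood of H
  obtain ⟨η, hη, hball⟩ := Metric.isOpen_iff.mp
    (isOpen_lt continuous_const hH) (x, v) hpos
  -- ball inside U
  obtain ⟨ρ, hρ, hρU⟩ := Metric.isOpen_iff.mp hU x hx
  set ε : ℝ := η / 16 with hεdef
  have hε : 0 < ε := by positivity
  obtain ⟨δ, hδ, hδP⟩ := hv ε hε
  set r : ℝ := min (min (δ / 2) (η / 2)) (ρ / 2) with hrdef
  have hr : 0 < r := by
    simp only [hrdef, lt_min_iff]
    refine ⟨⟨by linarith, by linarith⟩, by linarith⟩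
  have hrδ : r < δ := by
    have : r ≤ δ / 2 := (min_le_left _ _).trans (min_le_left _ _)
    linarith
  have hrη : r ≤ η / 2 := (min_le_left _ _).trans (min_le_right _ _)
  have hrU : Metric.closedBall x r ⊆ U := by
    intro y hy
    apply hρU
    have : r ≤ ρ / 2 := min_le_right _ _
    simp only [Metric.mem_closedBall] at hy
    simp only [Metric.mem_ball]
    linarith
  set A : ℝ := 8 * ε / r with hAdef
  have hA : 0 < A := by positivity
  have hAr : A * r = 8 * ε := by rw [hAdef, div_mul_cancel₀ _ hr.ne']
  set g : ℝ := ε * r with hgdef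
  have hg : 0 < g := by positivity
  set φu : EuclideanSpace ℝ (Fin n) → ℝ :=
    fun y => u y - (inner ℝ v (y - x) : ℝ) - A * ‖y - x‖ ^ 2 with hφu
  -- annulus estimate
  have hann : ∀ y ∈ U, ‖y - x‖ ≤ r → r / 2 ≤ ‖y - x‖ → φu y ≤ φu x - g := by
    intro y hy h1 h2
    have hu := hδP y hy (lt_of_le_of_lt h1 hrδ)
    have hx0 : φu x = u x := by simp [hφu]
    have key2 : A * ‖y - x‖ ^ 2 * r = 8 * ε * ‖y - x‖ ^ 2 := by
      rw [mul_right_comm, hAr]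
    have h4 : 4 * ε * ‖y - x‖ * r ≤ A * ‖y - x‖ ^ 2 * r := by
      rw [key2]
      nlinarith [mul_nonneg (mul_nonneg hε.le (norm_nonneg (y - x)))
        (sub_nonneg.mpr (by linarith : r ≤ 2 * ‖y - x‖))]
    have h5 : 4 * ε * ‖y - x‖ ≤ A * ‖y - x‖ ^ 2 :=
      le_of_mul_le_mul_right (by linarith) hr
    have h6 : ε * (r / 2) ≤ ε * ‖y - x‖ := mul_le_mul_of_nonneg_left h2 hε.le
    have ht : ε * ‖y - x‖ - A * ‖y - x‖ ^ 2 ≤ -g := by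
      rw [hgdef]; linarith
    have e1 : φu y = u y - (inner ℝ v (y - x) : ℝ) - A * ‖y - x‖ ^ 2 := rfl
    linarith
  obtain ⟨k, hk⟩ := hconv (g / 4) (by positivity)
  set φk : EuclideanSpace ℝ (Fin n) → ℝ :=
    fun y => uk k y - (inner ℝ v (y - x) : ℝ) - A * ‖y - x‖ ^ 2 with hφk
  -- maximizer on closed ball
  have hcomp : IsCompact (Metric.closedBall x r) := isCompact_closedBall x r
  have hφkc : ContinuousOn φk (Metric.closedBall x r) := by
    have c1 : Continuous fun y : EuclideanSpace ℝ (Fin n) => (inner ℝ v (y - x) : ℝ) :=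
      Continuous.inner continuous_const (continuous_id.sub continuous_const)
    have c2 : Continuous fun y : EuclideanSpace ℝ (Fin n) => A * ‖y - x‖ ^ 2 :=
      continuous_const.mul ((continuous_id.sub continuous_const).norm.pow 2)
    exact (((hcont k).mono hrU).sub c1.continuousOn).sub c2.continuousOn
  obtain ⟨z, hzS, hzmax⟩ := hcomp.exists_isMaxOn
    ⟨x, Metric.mem_closedBall_self hr.le⟩ hφkc
  have hzr : ‖z - x‖ ≤ r := by
    simpa [dist_eq_norm] using Metric.mem_closedBall.mp hzS
  have hzU : z ∈ U := hrU hzS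
  have hmaxx : φk x ≤ φk z := hzmax (Metric.mem_closedBall_self hr.le)
  -- z is close to x
  have hzclose : ‖z - x‖ < r / 2 := by
    by_contra hfar
    push_neg at hfar
    have h1 := hann z hzU hzr hfar
    have h2 : |u z - uk k z| < g / 4 := hk z hzU
    have h3 : |u x - uk k x| < g / 4 := hk x hx
    have e1 : φk z - φu z = uk k z - u z := by simp [hφk, hφu]
    have e2 : φk x - φu x = uk k x - u x := by simp [hφk, hφu]
    have h2' := abs_lt.mp h2
    have h3' := abs_lt.mp h3
    linarith [h2'.1, h2'.2, h3'.1, h3'.2]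
  set w : EuclideanSpace ℝ (Fin n) := v + (2 * A) • (z - x) with hwdef
  -- w is a supergradient of uk k at z
  have hsg : IsSuperGradOn U (uk k) z w := by
    intro ε' hε'
    refine ⟨min (ε' / A) (r - ‖z - x‖),
      lt_min_iff.mpr ⟨by positivity, by linarith⟩, ?_⟩
    intro y hy hyz
    have hyz1 : ‖y - z‖ < ε' / A := lt_of_lt_of_le hyz (min_le_left _ _)
    have hyz2 : ‖y - z‖ < r - ‖z - x‖ := lt_of_lt_of_le hyz (min_le_right _ _)
    have hyS : y ∈ Metric.closedBall x r := by
      have : ‖y - x‖ ≤ ‖y - z‖ + ‖z - x‖ := by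
        simpa using norm_sub_le_norm_sub_add_norm_sub y z x
      simp only [Metric.mem_closedBall, dist_eq_norm]
      linarith
    have hmax := hzmax hyS
    simp only [hφk] at hmax
    -- expand norms and inner products
    have hid : ‖y - x‖ ^ 2 = ‖z - x‖ ^ 2 + 2 * (inner ℝ (z - x) (y - z) : ℝ) + ‖y - z‖ ^ 2 := by
      have : y - x = (z - x) + (y - z) := by abel
      rw [this, norm_add_sq_real]
    have hinner : (inner ℝ v (y - x) : ℝ) = inner ℝ v (z - x) + inner ℝ v (y - z) := by
      have : y - x = (z - x) + (y - z) := by abel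
      rw [this, inner_add_right]
    have hwin : (inner ℝ w (y - z) : ℝ)
        = inner ℝ v (y - z) + 2 * A * (inner ℝ (z - x) (y - z) : ℝ) := by
      rw [hwdef, inner_add_left, real_inner_smul_left]
    have hquad : A * ‖y - z‖ ^ 2 ≤ ε' * ‖y - z‖ := by
      have h0 : 0 ≤ ‖y - z‖ := norm_nonneg _
      have hAy : A * ‖y - z‖ ≤ ε' := by
        rw [mul_comm]; exact ((lt_div_iff₀ hA).mp hyz1).le
      nlinarith [hAy, h0]
    have : uk k y ≤ uk k z + (inner ℝ w (y - z) : ℝ) + A * ‖y - z‖ ^ 2 := by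
      rw [hwin]
      have hm := hmax
      simp only [Set.mem_setOf_eq] at hm
      have hid' : A * ‖y - x‖ ^ 2 = A * ‖z - x‖ ^ 2
          + 2 * A * (inner ℝ (z - x) (y - z) : ℝ) + A * ‖y - z‖ ^ 2 := by
        rw [hid]; ring
      linarith [hm, hid', hinner]
    linarith
  have hle := hsol k z hzU w hsg
  -- but H z w > 0
  have hwv : ‖w - v‖ = 2 * A * ‖z - x‖ := by
    have e : w - v = (2 * A) • (z - x) := by rw [hwdef]; abel
    rw [e, norm_smul, Real.norm_eq_abs, abs_of_pos (by positivity)]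
  have hpos' : 0 < H z w := by
    have h1 : dist z x < η := by rw [dist_eq_norm]; linarith
    have h2 : dist w v < η := by
      rw [dist_eq_norm, hwv]
      have hp : (0:ℝ) < 2 * A := by linarith
      have hm : 2 * A * ‖z - x‖ < 2 * A * (r / 2) := mul_lt_mul_of_pos_left hzclose hp
      have he : 2 * A * (r / 2) = 8 * ε := by rw [← hAr]; ring
      have hee : ε = η / 16 := hεdef
      linarith
    have : (z, w) ∈ Metric.ball (x, v) η := by
      simp only [Metric.mem_ball, Prod.dist_eq, max_lt_iff]
      exact ⟨h1, h2⟩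
    exact hball this
  linarith

/-- Stability: a uniform limit of C-semiconcave viscosity solutions of
H(x,Du) = 0 on an open set U is again a viscosity solution. -/
theorem stmt15 (n : ℕ) (H : EuclideanSpace ℝ (Fin n) → EuclideanSpace ℝ (Fin n) → ℝ)
    (hH : Continuous fun p : EuclideanSpace ℝ (Fin n) × EuclideanSpace ℝ (Fin n) => H p.1 p.2)
    (U : Set (EuclideanSpace ℝ (Fin n))) (hU : IsOpen U)
    (C : ℝ) (uk : ℕ → EuclideanSpace ℝ (Fin n) → ℝ) (u : EuclideanSpace ℝ (Fin n) → ℝ)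
    (hsc : ∀ k, ConcaveOn ℝ U (fun x => uk k x - C / 2 * ‖x‖ ^ 2))
    (hvisc : ∀ k, IsViscositySolOn H (uk k) U)
    (hconv : TendstoUniformlyOn uk u Filter.atTop U) :
    IsViscositySolOn H u U := by
  have hcont : ∀ k, ContinuousOn (uk k) U := by
    intro k
    have h1 : ContinuousOn (fun x : EuclideanSpace ℝ (Fin n) => uk k x - C / 2 * ‖x‖ ^ 2) U :=
      (hsc k).continuousOn hU
    have h2 : Continuous fun x : EuclideanSpace ℝ (Fin n) => C / 2 * ‖x‖ ^ 2 :=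
      continuous_const.mul (continuous_norm.pow 2)
    have := h1.add h2.continuousOn
    exact this.congr (fun x _ => by simp)
  have hconv' : ∀ ε > (0:ℝ), ∃ k, ∀ y ∈ U, |u y - uk k y| < ε := by
    intro ε hε
    obtain ⟨k, hk⟩ := (Metric.tendstoUniformlyOn_iff.mp hconv ε hε).exists
    exact ⟨k, fun y hy => by simpa [Real.dist_eq] using hk y hy⟩
  intro x hx
  constructor
  · intro v hv
    exact key H hH U hU uk u hcont (fun k y hy w hw => (hvisc k y hy).1 w hw) hconv' x hx v hv
  · intro v hv
    have hH' : Continuous fun p : EuclideanSpace ℝ (Fin n) × EuclideanSpace ℝ (Fin n) =>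
        (fun y w => -H y (-w)) p.1 p.2 := by
      have : Continuous fun p : EuclideanSpace ℝ (Fin n) × EuclideanSpace ℝ (Fin n) =>
          (p.1, -p.2) := by fun_prop
      exact (hH.comp this).neg
    have hsol' : ∀ k, ∀ y ∈ U, ∀ w, IsSuperGradOn U (fun z => -(uk k z)) y w →
        (fun y w => -H y (-w)) y w ≤ 0 := by
      intro k y hy w hw
      have hsub : IsSubGradOn U (uk k) y (-w) := by
        intro ε hε
        obtain ⟨δ, hδ, hδP⟩ := hw ε hε
        refine ⟨δ, hδ, fun z hz hzy => ?_⟩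
        have h := hδP z hz hzy
        simp only at h
        rw [inner_neg_left]
        simp only [ge_iff_le]
        linarith
      have := (hvisc k y hy).2 (-w) hsub
      simpa using this
    have hconv'' : ∀ ε > (0:ℝ), ∃ k, ∀ y ∈ U, |(fun z => -(u z)) y - (fun k z => -(uk k z)) k y| < ε := by
      intro ε hε
      obtain ⟨k, hk⟩ := hconv' ε hε
      refine ⟨k, fun y hy => ?_⟩
      have h := hk y hy
      rw [abs_sub_comm] at h
      show |(-(u y)) - (-(uk k y))| < ε
      have h2 : (-(u y)) - (-(uk k y)) = uk k y - u y := by ring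
      rw [h2]
      exact h
    have hv' : IsSuperGradOn U (fun z => -(u z)) x (-v) := by
      intro ε hε
      obtain ⟨δ, hδ, hδP⟩ := hv ε hε
      refine ⟨δ, hδ, fun z hz hzy => ?_⟩
      have := hδP z hz hzy
      rw [inner_neg_left]
      simp only
      linarith
    have := key (fun y w => -H y (-w)) hH' U hU (fun k z => -(uk k z)) (fun z => -(u z))
      (fun k => (hcont k).neg) hsol' hconv'' x hx (-v) hv'
    simp only [neg_neg] at this
    linarith
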